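/- For X ≥ 1/5, Y ∈ ℝ with sin(2πY) ≠ 0, and any positive integer k, |Σ_{n≥1} n⁵ e^{−π(n²−1)X} sin(2nkπY)| ≤ k · (1 + ω(X))/(1 − μ(X)) · |Σ_{n≥1} n e^{−π(n²−1)X} sin(2nπY)|, where μ(X) = Σ_{n≥2} n² e^{−π(n²−1)X} and ω(X) = Σ_{n≥2} n⁶ e^{−π(n²−1)X}. -/

import Mathlib

/-!
Since `|sin (m x)| ≤ m |sin x|`, the `n`-th term of the first series is at most
`k |sin 2πY| n⁶ e^{-π(n²-1)X}`, so the series is bounded by `k |sin 2πY| (1 + ω(X))`. In the second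
series the `n = 1` term is `sin 2πY` and the `n`-th term is at most `|sin 2πY| n² e^{-π(n²-1)X}`,
so its absolute value is at least `|sin 2πY| (1 - μ(X))`. Finally `μ(X) < 1` for `X ≥ 1/5`, by
comparing `μ` with a geometric series.
-/

open Real

lemma Real.abs_sin_nat_mul_le (m : ℕ) (x : ℝ) : |sin (m * x)| ≤ m * |sin x| := by
  induction m with
  | zero => simp
  | succ m ih =>
    calc |sin ((m + 1 : ℕ) * x)| = |sin (m * x) * cos x + cos (m * x) * sin x| := by
          push_cast; rw [add_mul, one_mul, sin_add]
      _ ≤ |sin (m * x)| * |cos x| + |cos (m * x)| * |sin x| := by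
          simpa only [abs_mul] using abs_add_le (sin (m * x) * cos x) (cos (m * x) * sin x)
      _ ≤ |sin (m * x)| + |sin x| := by
          gcongr
          · exact mul_le_of_le_one_right (abs_nonneg _) (abs_cos_le_one x)
          · exact mul_le_of_le_one_left (abs_nonneg _) (abs_cos_le_one _)
      _ ≤ (m + 1 : ℕ) * |sin x| := by push_cast; linarith

lemma add_two_sq_le_four_mul_three_pow (n : ℕ) : ((n : ℝ) + 2) ^ 2 ≤ 4 * 3 ^ n := by
  induction n with
  | zero => norm_num
  | succ n ih =>
    calc ((n + 1 : ℕ) + 2 : ℝ) ^ 2 ≤ 3 * ((n : ℝ) + 2) ^ 2 := by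
          push_cast; nlinarith [(n.cast_nonneg : (0 : ℝ) ≤ n)]
      _ ≤ 4 * 3 ^ (n + 1) := by rw [pow_succ (3 : ℝ) n]; linarith

lemma Real.exp_neg_three_fifths_le : exp (-(3 / 5)) ≤ 50 / 89 := by
  rw [exp_neg, inv_le_comm₀ (exp_pos _) (by norm_num)]
  linarith [quadratic_le_exp_of_nonneg (x := 3 / 5) (by norm_num)]

-- `thetaTerm p X n = nᵖ e^{-π(n²-1)X}`; `μ(X)` and `ω(X)` are the tails `∑_{n ≥ 2}` of
-- `thetaTerm 2 X n` and `thetaTerm 6 X n`.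
noncomputable def thetaTerm (p : ℕ) (X m : ℝ) : ℝ := m ^ p * exp (-π * (m ^ 2 - 1) * X)

namespace thetaTerm

variable {X : ℝ}

lemma nonneg {p : ℕ} {m : ℝ} (hm : 0 ≤ m) : 0 ≤ thetaTerm p X m := by
  unfold thetaTerm; positivity

lemma summable_nat_add (p : ℕ) (hX : 0 < X) (j : ℕ) :
    Summable fun n : ℕ ↦ thetaTerm p X (n + j) := by
  have h : Summable fun n : ℕ ↦ thetaTerm p X n := by
    refine ((summable_pow_mul_exp_neg_nat_mul p (mul_pos pi_pos hX)).mul_left (exp (π * X)))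
      |>.of_nonneg_of_le (fun n ↦ nonneg n.cast_nonneg) fun n ↦ ?_
    have hn : (n : ℝ) ≤ (n : ℝ) ^ 2 := by exact_mod_cast Nat.le_self_pow two_ne_zero n
    rw [thetaTerm, mul_left_comm, ← exp_add]
    gcongr
    nlinarith [mul_pos pi_pos hX]
  exact_mod_cast (summable_nat_add_iff j).2 h

lemma tsum_add_one (p : ℕ) (hX : 0 < X) :
    ∑' n : ℕ, thetaTerm p X (n + 1) = 1 + ∑' n : ℕ, thetaTerm p X (n + 2) := by
  have hsum : Summable fun n : ℕ ↦ thetaTerm p X (n + 1) := by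
    exact_mod_cast summable_nat_add p hX 1
  rw [hsum.tsum_eq_zero_add]
  norm_num [thetaTerm, add_assoc, one_add_one_eq_two]

-- `(n + 2)² - 1 ≥ 5n + 3` and `πX ≥ 3/5` give the exponent; `(n + 2)² ≤ 4 ⬝ 3ⁿ` the prefactor.
lemma two_natCast_add_two_le (hX : 1 / 5 ≤ X) (n : ℕ) :
    thetaTerm 2 X (n + 2) ≤ 4 * exp (-(3 / 5)) ^ 3 * (3 * exp (-(3 / 5)) ^ 5) ^ n := by
  have hn : (n : ℝ) ≤ (n : ℝ) ^ 2 := by exact_mod_cast Nat.le_self_pow two_ne_zero n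
  have hexp : exp (-π * (((n : ℝ) + 2) ^ 2 - 1) * X) ≤ exp (-(3 / 5)) ^ (5 * n + 3) := by
    have hπX : 3 / 5 ≤ π * X := by nlinarith [pi_gt_three]
    have hm : 5 * (n : ℝ) + 3 ≤ ((n : ℝ) + 2) ^ 2 - 1 := by nlinarith
    rw [← exp_nat_mul, exp_le_exp]
    push_cast
    nlinarith [mul_le_mul hm hπX (by norm_num) (by linarith [(n.cast_nonneg : (0 : ℝ) ≤ n)])]
  calc thetaTerm 2 X (n + 2) ≤ (4 * 3 ^ n) * exp (-(3 / 5)) ^ (5 * n + 3) :=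
        mul_le_mul (add_two_sq_le_four_mul_three_pow n) hexp (exp_pos _).le (by positivity)
    _ = _ := by ring

lemma tsum_two_add_two_lt_one (hX : 1 / 5 ≤ X) : ∑' n : ℕ, thetaTerm 2 X (n + 2) < 1 := by
  set q := exp (-(3 / 5))
  have hq : q ≤ 50 / 89 := exp_neg_three_fifths_le
  have hq0 : 0 ≤ 3 * q ^ 5 := by positivity
  have hq1 : 3 * q ^ 5 < 1 := by
    calc 3 * q ^ 5 ≤ 3 * (50 / 89) ^ 5 := by gcongr
      _ < 1 := by norm_num
  have hgeom := (summable_geometric_of_lt_one hq0 hq1).mul_left (4 * q ^ 3)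
  calc ∑' n : ℕ, thetaTerm 2 X (n + 2) ≤ ∑' n : ℕ, 4 * q ^ 3 * (3 * q ^ 5) ^ n :=
        (summable_nat_add 2 (by linarith) 2).tsum_le_tsum (two_natCast_add_two_le hX) hgeom
    _ = 4 * q ^ 3 / (1 - 3 * q ^ 5) := by
        rw [tsum_mul_left, tsum_geometric_of_lt_one hq0 hq1, div_eq_mul_inv]
    _ < 1 := by
        rw [div_lt_one (by linarith)]
        have : 4 * q ^ 3 + 3 * q ^ 5 ≤ 4 * (50 / 89) ^ 3 + 3 * (50 / 89) ^ 5 := by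
          gcongr
        norm_num at this
        linarith

lemma succ (p : ℕ) (X m : ℝ) : thetaTerm (p + 1) X m = m * thetaTerm p X m := by
  unfold thetaTerm; ring

lemma abs_mul_sin_le (p k m : ℕ) (Y : ℝ) :
    |thetaTerm p X m * sin (2 * m * k * π * Y)|
      ≤ k * |sin (2 * π * Y)| * thetaTerm (p + 1) X m := by
  have hsin := abs_sin_nat_mul_le (m * k) (2 * π * Y)
  rw [show ((m * k : ℕ) : ℝ) * (2 * π * Y) = 2 * m * k * π * Y by push_cast; ring] at hsin
  rw [abs_mul, abs_of_nonneg (nonneg m.cast_nonneg), succ]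
  calc thetaTerm p X m * |sin (2 * m * k * π * Y)|
      ≤ thetaTerm p X m * ((m * k : ℕ) * |sin (2 * π * Y)|) :=
        mul_le_mul_of_nonneg_left hsin (nonneg m.cast_nonneg)
    _ = _ := by push_cast; ring

lemma abs_tsum_mul_sin_le (hX : 0 < X) (p k : ℕ) (Y : ℝ) :
    |∑' n : ℕ, thetaTerm p X (n + 1) * sin (2 * (n + 1) * k * π * Y)|
      ≤ k * |sin (2 * π * Y)| * ∑' n : ℕ, thetaTerm (p + 1) X (n + 1) := by
  have hsum : Summable fun n : ℕ ↦ thetaTerm (p + 1) X (n + 1) := by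
    exact_mod_cast summable_nat_add (p + 1) hX 1
  rw [← Real.norm_eq_abs]
  refine tsum_of_norm_bounded (hsum.hasSum.mul_left _) fun n ↦ ?_
  rw [Real.norm_eq_abs]
  exact_mod_cast abs_mul_sin_le p k (n + 1) Y

lemma one_right (p : ℕ) (X : ℝ) : thetaTerm p X 1 = 1 := by
  simp [thetaTerm]

lemma abs_sin_mul_one_sub_le_abs_tsum (hX : 0 < X) (Y : ℝ) :
    |sin (2 * π * Y)| * (1 - ∑' n : ℕ, thetaTerm 2 X (n + 2))
      ≤ |∑' n : ℕ, (n + 1) * exp (-π * ((n + 1) ^ 2 - 1) * X) *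
          sin (2 * (n + 1) * π * Y)| := by
  have hterm (m : ℝ) : m * exp (-π * (m ^ 2 - 1) * X) = thetaTerm 1 X m := by
    rw [thetaTerm, pow_one]
  simp only [hterm]
  have hsum : Summable fun n : ℕ ↦ thetaTerm 2 X (n + 2) := by
    exact_mod_cast summable_nat_add 2 hX 2
  have hsum' : Summable fun n : ℕ ↦ thetaTerm 1 X (n + 1) * sin (2 * (n + 1) * π * Y) := by
    refine (summable_nat_add 1 hX 1).of_norm_bounded fun n ↦ ?_
    rw [norm_mul, Real.norm_of_nonneg (nonneg (by positivity)), Nat.cast_one]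
    exact mul_le_of_le_one_right (nonneg (by positivity)) (abs_sin_le_one _)
  have htail : |∑' n : ℕ, thetaTerm 1 X (n + 2) * sin (2 * (n + 2) * π * Y)|
      ≤ |sin (2 * π * Y)| * ∑' n : ℕ, thetaTerm 2 X (n + 2) := by
    rw [← Real.norm_eq_abs]
    refine tsum_of_norm_bounded (hsum.hasSum.mul_left _) fun n ↦ ?_
    have := abs_mul_sin_le (X := X) 1 1 (n + 2) Y
    push_cast at this
    simpa using this
  rw [hsum'.tsum_eq_zero_add]
  simp only [Nat.cast_zero, zero_add, one_right, one_mul, mul_one, Nat.cast_add_one, add_assoc,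
    one_add_one_eq_two]
  linarith [abs_sub_abs_le_abs_add (sin (2 * π * Y))
    (∑' n : ℕ, thetaTerm 1 X (n + 2) * sin (2 * (n + 2) * π * Y))]

end thetaTerm

theorem thetaXXY_quotient_bound_general (X Y : ℝ) (hX : 1/5 ≤ X)
    (k : ℕ) :
    |∑' n : ℕ, ((n : ℝ) + 1)^5 * Real.exp (-π * (((n : ℝ) + 1)^2 - 1) * X) *
        Real.sin (2 * ((n : ℝ) + 1) * (k : ℝ) * π * Y)|
      ≤ (k : ℝ) *
        ((1 + ∑' n : ℕ, ((n : ℝ) + 2)^6 * Real.exp (-π * (((n : ℝ) + 2)^2 - 1) * X)) /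
         (1 - ∑' n : ℕ, ((n : ℝ) + 2)^2 * Real.exp (-π * (((n : ℝ) + 2)^2 - 1) * X))) *
        |∑' n : ℕ, ((n : ℝ) + 1) * Real.exp (-π * (((n : ℝ) + 1)^2 - 1) * X) *
            Real.sin (2 * ((n : ℝ) + 1) * π * Y)| := by
  have hX₀ : 0 < X := by linarith
  set μ := ∑' n : ℕ, thetaTerm 2 X (n + 2)
  set ω := ∑' n : ℕ, thetaTerm 6 X (n + 2)
  have hμ : μ < 1 := thetaTerm.tsum_two_add_two_lt_one hX
  have hω : 0 ≤ ω := tsum_nonneg fun n ↦ thetaTerm.nonneg (by positivity)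
  have hnum := thetaTerm.abs_tsum_mul_sin_le hX₀ 5 k Y
  rw [thetaTerm.tsum_add_one 6 hX₀] at hnum
  calc _ ≤ k * |sin (2 * π * Y)| * (1 + ω) := hnum
    _ = k * ((1 + ω) / (1 - μ)) * (|sin (2 * π * Y)| * (1 - μ)) := by
        field_simp [(sub_pos.2 hμ).ne']
    _ ≤ _ := mul_le_mul_of_nonneg_left (thetaTerm.abs_sin_mul_one_sub_le_abs_tsum hX₀ Y)
        (mul_nonneg k.cast_nonneg (div_nonneg (by linarith) (by linarith)))

theorem thetaXXY_quotient_bound (X Y : ℝ) (hX : 1/5 ≤ X) (hY : Real.sin (2 * π * Y) ≠ 0)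
    (k : ℕ) (hk : 1 ≤ k) :
    |∑' n : ℕ, ((n : ℝ) + 1)^5 * Real.exp (-π * (((n : ℝ) + 1)^2 - 1) * X) *
        Real.sin (2 * ((n : ℝ) + 1) * (k : ℝ) * π * Y)|
      ≤ (k : ℝ) *
        ((1 + ∑' n : ℕ, ((n : ℝ) + 2)^6 * Real.exp (-π * (((n : ℝ) + 2)^2 - 1) * X)) /
         (1 - ∑' n : ℕ, ((n : ℝ) + 2)^2 * Real.exp (-π * (((n : ℝ) + 2)^2 - 1) * X))) *
        |∑' n : ℕ, ((n : ℝ) + 1) * Real.exp (-π * (((n : ℝ) + 1)^2 - 1) * X) *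
            Real.sin (2 * ((n : ℝ) + 1) * π * Y)| :=
  thetaXXY_quotient_bound_general X Y hX k
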